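/- Let L : I × I' → ℝ≥0 be TP₂ and let a₀ < a₁ be points of I. Define L^{(a₀,a₁)}(x,y) = L(x,y) if x ∉ [a₀,a₁], and L^{(a₀,a₁)}(x,y) = ((a₁−x)/(a₁−a₀))·L(a₀,y) + ((x−a₀)/(a₁−a₀))·L(a₁,y) if x ∈ [a₀,a₁]. Then L^{(a₀,a₁)} is TP₂ on I × I'. -/
import Mathlib


open MeasureTheory Set Filter

/-- `L` is totally positive of order 2 on `I × J`. -/
def IsTP2 (I J : Set ℝ) (L : ℝ → ℝ → ℝ) : Prop :=
  ∀ x₁ ∈ I, ∀ x₂ ∈ I, ∀ y₁ ∈ J, ∀ y₂ ∈ J,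
    x₁ ≤ x₂ → y₁ ≤ y₂ → L x₁ y₂ * L x₂ y₁ ≤ L x₁ y₁ * L x₂ y₂

theorem stmt1 (I I' : Set ℝ) (hI : I.OrdConnected) (hI' : I'.OrdConnected)
    (L : ℝ → ℝ → ℝ)
    (hL0 : ∀ x ∈ I, ∀ y ∈ I', 0 ≤ L x y)
    (hL : IsTP2 I I' L)
    (a₀ a₁ : ℝ) (ha₀ : a₀ ∈ I) (ha₁ : a₁ ∈ I) (ha : a₀ < a₁) :
    IsTP2 I I' (fun x y =>
      if x ∈ Icc a₀ a₁ then
        ((a₁ - x) / (a₁ - a₀)) * L a₀ y + ((x - a₀) / (a₁ - a₀)) * L a₁ y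
      else L x y) := by
  intro x₁ hx₁ x₂ hx₂ y₁ hy₁ y₂ hy₂ hx hy
  have hd : (0:ℝ) < a₁ - a₀ := by linarith
  simp only
  by_cases h1 : x₁ ∈ Icc a₀ a₁ <;> by_cases h2 : x₂ ∈ Icc a₀ a₁ <;>
    simp only [h1, h2, if_true, if_false]
  · -- both inside
    obtain ⟨h1a, h1b⟩ := h1
    obtain ⟨h2a, h2b⟩ := h2
    have hdet : L a₀ y₂ * L a₁ y₁ ≤ L a₀ y₁ * L a₁ y₂ :=
      hL a₀ ha₀ a₁ ha₁ y₁ hy₁ y₂ hy₂ ha.le hy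
    have hlam : (0:ℝ) ≤ (x₂ - x₁) / ((a₁ - a₀)) :=
      div_nonneg (by linarith) (by positivity)
    have key : (0:ℝ) ≤ ((x₂ - x₁) / ((a₁ - a₀))) *
        (L a₀ y₁ * L a₁ y₂ - L a₀ y₂ * L a₁ y₁) :=
      mul_nonneg hlam (by linarith)
    have hne : a₁ - a₀ ≠ 0 := ne_of_gt hd
    have id : ((a₁ - x₁) / (a₁ - a₀) * L a₀ y₁ + (x₁ - a₀) / (a₁ - a₀) * L a₁ y₁) *
          ((a₁ - x₂) / (a₁ - a₀) * L a₀ y₂ + (x₂ - a₀) / (a₁ - a₀) * L a₁ y₂) -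
        ((a₁ - x₁) / (a₁ - a₀) * L a₀ y₂ + (x₁ - a₀) / (a₁ - a₀) * L a₁ y₂) *
          ((a₁ - x₂) / (a₁ - a₀) * L a₀ y₁ + (x₂ - a₀) / (a₁ - a₀) * L a₁ y₁) =
        ((x₂ - x₁) / ((a₁ - a₀))) *
          (L a₀ y₁ * L a₁ y₂ - L a₀ y₂ * L a₁ y₁) := by
      field_simp
      ring
    linarith [key, id]
  · -- x₁ inside, x₂ outside (so a₁ < x₂)
    obtain ⟨h1a, h1b⟩ := h1
    have hx2 : a₁ < x₂ := by
      rcases lt_or_ge a₁ x₂ with h | h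
      · exact h
      · exact absurd ⟨le_trans h1a hx, h⟩ h2
    have hl : (0:ℝ) ≤ (a₁ - x₁) / (a₁ - a₀) := div_nonneg (by linarith) hd.le
    have hm : (0:ℝ) ≤ (x₁ - a₀) / (a₁ - a₀) := div_nonneg (by linarith) hd.le
    have t1 : L a₀ y₂ * L x₂ y₁ ≤ L a₀ y₁ * L x₂ y₂ :=
      hL a₀ ha₀ x₂ hx₂ y₁ hy₁ y₂ hy₂ (by linarith) hy
    have t2 : L a₁ y₂ * L x₂ y₁ ≤ L a₁ y₁ * L x₂ y₂ :=
      hL a₁ ha₁ x₂ hx₂ y₁ hy₁ y₂ hy₂ hx2.le hy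
    nlinarith [mul_le_mul_of_nonneg_left t1 hl, mul_le_mul_of_nonneg_left t2 hm]
  · -- x₁ outside, x₂ inside (so x₁ < a₀)
    obtain ⟨h2a, h2b⟩ := h2
    have hx1 : x₁ < a₀ := by
      rcases lt_or_ge x₁ a₀ with h | h
      · exact h
      · exact absurd ⟨h, le_trans hx h2b⟩ h1
    have hl : (0:ℝ) ≤ (a₁ - x₂) / (a₁ - a₀) := div_nonneg (by linarith) hd.le
    have hm : (0:ℝ) ≤ (x₂ - a₀) / (a₁ - a₀) := div_nonneg (by linarith) hd.le
    have t1 : L x₁ y₂ * L a₀ y₁ ≤ L x₁ y₁ * L a₀ y₂ :=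
      hL x₁ hx₁ a₀ ha₀ y₁ hy₁ y₂ hy₂ hx1.le hy
    have t2 : L x₁ y₂ * L a₁ y₁ ≤ L x₁ y₁ * L a₁ y₂ :=
      hL x₁ hx₁ a₁ ha₁ y₁ hy₁ y₂ hy₂ (by linarith) hy
    nlinarith [mul_le_mul_of_nonneg_left t1 hl, mul_le_mul_of_nonneg_left t2 hm]
  · exact hL x₁ hx₁ x₂ hx₂ y₁ hy₁ y₂ hy₂ hx hy
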